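/- Let k, r be integers with 2 ≤ k and 2k ≤ r, and let x be an integer with 0 ≤ x ≤ (k-1)((r-k)-(k-1)). Then there exist integers y and t with 0 < 2t ≤ y ≤ r-k, t ≤ k-1, and t(y-1-t) ≤ x ≤ t(y-t). -/
import Mathlib

private lemma aux_step (n x t : ℤ) (ht : 1 ≤ t) (htn : 2 * t ≤ n)
    (hx1 : t * t ≤ x) (hx2 : x ≤ t * (n - t)) :
    ∃ y t' : ℤ, 0 < 2 * t' ∧ 2 * t' ≤ y ∧ y ≤ n ∧ t' ≤ t ∧
      t' * (y - 1 - t') ≤ x ∧ x ≤ t' * (y - t') := by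
  have ht0 : 0 < t := by linarith
  set c : ℤ := (x + t - 1) / t with hc
  have hdm := Int.mul_ediv_add_emod (x + t - 1) t
  have hr0 : 0 ≤ (x + t - 1) % t := Int.emod_nonneg _ (by linarith)
  have hr1 : (x + t - 1) % t < t := Int.emod_lt_of_pos _ ht0
  have h1 : x ≤ t * c := by nlinarith
  have h2 : t * c ≤ x + t - 1 := by nlinarith
  have hct : t ≤ c := by
    have : t * t ≤ t * c := le_trans hx1 h1
    exact le_of_mul_le_mul_left this ht0
  have hcn : c ≤ n - t := by
    have : t * c < t * (n - t + 1) := by nlinarith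
    have := lt_of_mul_lt_mul_left this (le_of_lt ht0)
    linarith
  refine ⟨t + c, t, by linarith, by linarith, by linarith, le_refl t, ?_, ?_⟩
  · nlinarith
  · nlinarith

private lemma aux (n x : ℤ) (hn : 2 ≤ n) (hx : 1 ≤ x) :
    ∀ m : ℕ, 1 ≤ (m : ℤ) → 2 * (m : ℤ) ≤ n → x ≤ (m : ℤ) * (n - m) →
    ∃ y t : ℤ, 0 < 2 * t ∧ 2 * t ≤ y ∧ y ≤ n ∧ t ≤ (m : ℤ) ∧
      t * (y - 1 - t) ≤ x ∧ x ≤ t * (y - t) := by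
  intro m
  induction m with
  | zero => intro h; norm_num at h
  | succ m ih =>
    intro h1 h2 h3
    push_cast at h1 h2 h3 ⊢
    by_cases hcase : 1 ≤ (m : ℤ) ∧ x ≤ (m : ℤ) * (n - m)
    · obtain ⟨y, t, p1, p2, p3, p4, p5, p6⟩ := ih hcase.1 (by linarith) hcase.2
      exact ⟨y, t, p1, p2, p3, by push_cast at p4; linarith, p5, p6⟩
    · -- t = m + 1 works
      have hsq : ((m : ℤ) + 1) * ((m : ℤ) + 1) ≤ x := by
        rcases Nat.eq_zero_or_pos m with hm | hm
        · subst hm; push_cast; linarith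
        · have hm1 : 1 ≤ (m : ℤ) := by exact_mod_cast hm
          have hx' : (m : ℤ) * (n - m) < x := by
            by_contra hcon
            exact hcase ⟨hm1, by linarith⟩
          nlinarith
      exact aux_step n x ((m : ℤ) + 1) (by linarith) (by linarith)
        hsq (by push_cast; linarith)

/-- Numerical lemma from the proof of Theorem 1: for integers `k, r` with `2 ≤ k`,
`2k ≤ r`, and `0 ≤ x ≤ (k-1)((r-k)-(k-1))`, there exist integers `y`, `t` with
`0 < 2t ≤ y ≤ r - k`, `t ≤ k - 1` and `t(y-1-t) ≤ x ≤ t(y-t)`. -/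
theorem stmt2 (k r x : ℤ) (hk : 2 ≤ k) (hr : 2 * k ≤ r)
    (hx0 : 0 ≤ x) (hx1 : x ≤ (k - 1) * ((r - k) - (k - 1))) :
    ∃ y t : ℤ, 0 < 2 * t ∧ 2 * t ≤ y ∧ y ≤ r - k ∧ t ≤ k - 1 ∧
      t * (y - 1 - t) ≤ x ∧ x ≤ t * (y - t) := by
  set n : ℤ := r - k with hn
  have hn2 : 2 ≤ n := by linarith
  rcases eq_or_lt_of_le hx0 with h0 | h0
  · exact ⟨2, 1, by norm_num, by norm_num, by linarith, by linarith,
      by linarith, by linarith⟩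
  -- x ≥ 1
  have hx : 1 ≤ x := h0
  -- choose T
  by_cases hT : 2 * (k - 1) ≤ n
  · -- T = k - 1
    have hk1 : 1 ≤ k - 1 := by linarith
    obtain ⟨y, t, p1, p2, p3, p4, p5, p6⟩ :=
      aux n x hn2 hx (k - 1).toNat
        (by rw [Int.toNat_of_nonneg (by linarith)]; linarith)
        (by rw [Int.toNat_of_nonneg (by linarith)]; linarith)
        (by rw [Int.toNat_of_nonneg (by linarith)]; linarith)
    rw [Int.toNat_of_nonneg (by linarith : (0:ℤ) ≤ k - 1)] at p4
    exact ⟨y, t, p1, p2, p3, p4, p5, p6⟩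
  · -- T = n / 2
    push_neg at hT
    set T : ℤ := n / 2 with hTdef
    have hd := Int.mul_ediv_add_emod n 2
    have he0 : 0 ≤ n % 2 := Int.emod_nonneg _ (by norm_num)
    have he1 : n % 2 < 2 := Int.emod_lt_of_pos _ (by norm_num)
    have hT1 : 1 ≤ T := by omega
    have hT2 : 2 * T ≤ n := by omega
    have hTk : T ≤ k - 2 := by omega
    have hxT : x ≤ T * (n - T) := by
      -- (k-1)(n-(k-1)) ≤ T(n-T)
      have hpar : n = 2 * T ∨ n = 2 * T + 1 := by omega
      rcases hpar with hp | hp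
      · nlinarith [sq_nonneg (n - 2 * (k - 1))]
      · nlinarith [sq_nonneg (n - 2 * (k - 1)), mul_nonneg
          (by linarith : (0:ℤ) ≤ k - 2 - T) (by linarith : (0:ℤ) ≤ k - 1 - T)]
    obtain ⟨y, t, p1, p2, p3, p4, p5, p6⟩ :=
      aux n x hn2 hx T.toNat
        (by rw [Int.toNat_of_nonneg (by linarith)]; linarith)
        (by rw [Int.toNat_of_nonneg (by linarith)]; linarith)
        (by rw [Int.toNat_of_nonneg (by linarith)]; exact hxT)
    rw [Int.toNat_of_nonneg (by linarith : (0:ℤ) ≤ T)] at p4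
    exact ⟨y, t, p1, p2, p3, by linarith, p5, p6⟩
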